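/- arXiv:2306.08519 — 2 statements merged into one kernel-verified Lean document; each statement's English description precedes it below -/
import Mathlib

section
/- For every 1 ≤ j ≤ I−2 and every t ∈ [τ(j), T], one has μ(t)/κ(t) + γ(t)·a(j) + θ(j)_{0−} − θ(j)(t) = ((I−j+1)/(I−j))·A(j)·(γ(t) − γ(τ(j))) + Σ_{k=j+1}^{I−2} (A(k)/(I−k))·(γ(max(t, τ(k))) − γ(τ(k))). -/
open MeasureTheory

/-- `a_Σ^{≥j} = Σ_{k=j}^{I} a(k)`. -/
noncomputable def aSig (I : ℕ) (a : ℕ → ℝ) (j : ℕ) : ℝ :=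
  ∑ k ∈ Finset.Icc j I, a k

/-- `A(j) = a(j) − a_Σ^{≥j}/(I−j+1)` for `j ≤ I−1`, and `A(I) = a(I) − a_Σ^{≥I−1}/2`. -/
noncomputable def Acoef (I : ℕ) (a : ℕ → ℝ) (j : ℕ) : ℝ :=
  if j = I then a I - aSig I a (I - 1) / 2
  else a j - aSig I a j / ((I : ℝ) - (j : ℝ) + 1)

/-- The largest index `j ≤ I−2` with `τ(j) ≤ t` (and `0` if none). -/
noncomputable def lastIdx (I : ℕ) (τ : ℕ → ℝ) (t : ℝ) : ℕ :=
  (Finset.filter (fun j => τ j ≤ t) (Finset.range (I - 1))).sup id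

/-- The candidate equilibrium stock price drift `μ`, defined piecewise:
for `t ∈ [τ(j), τ(j+1))` (with `0 ≤ j ≤ I−2` the largest index with `τ(j) ≤ t`),
`μ(t) = −κ(t)·(γ(t)·a_Σ^{≥j+1}/(I−j) + Σ_{k=1}^{j} γ(τ(k))·A(k)/(I−k))`, and
for `t ∈ [τ(I−1), T]`,
`μ(t) = −κ(t)·(γ(t)·a_Σ^{≥I−1}/2 + Σ_{k=1}^{I−2} γ(τ(k))·A(k)/(I−k))`. -/
noncomputable def muDrift (κ γ : ℝ → ℝ) (I : ℕ) (a : ℕ → ℝ) (τ : ℕ → ℝ) (t : ℝ) : ℝ :=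
  if t < τ (I - 1) then
    -(κ t) * (γ t * aSig I a (lastIdx I τ t + 1) / ((I : ℝ) - (lastIdx I τ t : ℝ))
      + ∑ k ∈ Finset.Icc 1 (lastIdx I τ t), γ (τ k) * Acoef I a k / ((I : ℝ) - (k : ℝ)))
  else
    -(κ t) * (γ t * aSig I a (I - 1) / 2
      + ∑ k ∈ Finset.Icc 1 (I - 2), γ (τ k) * Acoef I a k / ((I : ℝ) - (k : ℝ)))

/-- Agent `(j)`'s candidate optimal trading strategy:
`θ(j)(t) = θ(j)_{0−} + μ(t)/κ(t) + γ(t)·a(j)` for `t ≤ τ(j)`, frozen afterwards. -/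
noncomputable def thetaEq (κ γ : ℝ → ℝ) (I : ℕ) (a : ℕ → ℝ) (τ : ℕ → ℝ)
    (θ0 : ℕ → ℝ) (j : ℕ) (t : ℝ) : ℝ :=
  if t ≤ τ j then θ0 j + muDrift κ γ I a τ t / κ t + γ t * a j
  else θ0 j + muDrift κ γ I a τ (τ j) / κ (τ j) + γ (τ j) * a j

/-!
On `[τ(m), τ(m+1))` the ratio `−μ/κ` is an affine function `G_m` of `γ(t)`, and passing from
`G_m` to `G_{m+1}` adds `A(m+1)/(I−m−1)·(γ(τ(m+1)) − γ(t))`, because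
`a_Σ^{≥m+1}/(I−m) − a_Σ^{≥m+2}/(I−m−1) = A(m+1)/(I−m−1)`.
Telescoping from the index `j` to the index active at `t` gives the claimed sum, while at `t = τ(j)`
all later stop-trade times `τ(k) = τ(j)` contribute nothing.
-/

/-- `G_m(x)` with `x = γ(t)` and `y k = γ(τ(k))`, so that `μ(t) = −κ(t)·G_m(γ(t))` on
`[τ(m), τ(m+1))`. -/
noncomputable def driftCore (I : ℕ) (a y : ℕ → ℝ) (m : ℕ) (x : ℝ) : ℝ :=
  x * aSig I a (m + 1) / ((I : ℝ) - (m : ℝ))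
    + ∑ k ∈ Finset.Icc 1 m, y k * Acoef I a k / ((I : ℝ) - (k : ℝ))

lemma aSig_eq_add_aSig_succ (I : ℕ) (a : ℕ → ℝ) {j : ℕ} (h : j ≤ I) :
    aSig I a j = a j + aSig I a (j + 1) := by
  rw [aSig, aSig, ← Finset.Ioc_insert_left h, Finset.sum_insert (by simp),
    Finset.Icc_add_one_left_eq_Ioc]

lemma Acoef_of_lt (I : ℕ) (a : ℕ → ℝ) {j : ℕ} (h : j < I) :
    Acoef I a j = a j - (a j + aSig I a (j + 1)) / ((I : ℝ) - (j : ℝ) + 1) := by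
  rw [Acoef, if_neg (by omega), ← aSig_eq_add_aSig_succ I a (by omega)]

lemma driftCore_succ (I : ℕ) (a y : ℕ → ℝ) {m : ℕ} (x : ℝ) (hm : m + 2 ≤ I) :
    driftCore I a y (m + 1) x
      = driftCore I a y m x + Acoef I a (m + 1) / ((I : ℝ) - (m + 1 : ℕ)) * (y (m + 1) - x) := by
  have hI : (m : ℝ) + 2 ≤ I := by exact_mod_cast hm
  have h₁ : (I : ℝ) - m ≠ 0 := by linarith
  have h₂ : (I : ℝ) - (m + 1) ≠ 0 := by linarith
  have h₃ : (I : ℝ) - (m + 1) + 1 ≠ 0 := by linarith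
  rw [driftCore, driftCore, Finset.sum_Icc_succ_top (by omega),
    aSig_eq_add_aSig_succ I a (j := m + 1) (by omega), Acoef_of_lt I a (by omega)]
  push_cast
  field_simp
  ring

lemma driftCore_eq_add_sum (I : ℕ) (a y : ℕ → ℝ) (x : ℝ) {j m : ℕ} (hjm : j ≤ m)
    (hm : m < I) :
    driftCore I a y m x = driftCore I a y j x
      + ∑ k ∈ Finset.Ioc j m, Acoef I a k / ((I : ℝ) - (k : ℝ)) * (y k - x) := by
  induction m, hjm using Nat.le_induction with
  | base => simp
  | succ n hjn ih =>
    rw [driftCore_succ I a y x hm, ih (by omega), Finset.sum_Ioc_succ_top hjn]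
    ring

lemma lastIdx_le (I : ℕ) (τ : ℕ → ℝ) (t : ℝ) : lastIdx I τ t ≤ I - 2 :=
  Finset.sup_le fun k hk => by
    have := Finset.mem_range.mp (Finset.mem_filter.mp hk).1
    exact (by omega : k ≤ I - 2)

lemma le_lastIdx {I : ℕ} {τ : ℕ → ℝ} {t : ℝ} {k : ℕ} (hk : k + 2 ≤ I) (hτk : τ k ≤ t) :
    k ≤ lastIdx I τ t :=
  Finset.le_sup (f := id) (Finset.mem_filter.mpr ⟨Finset.mem_range.mpr (by omega), hτk⟩)

lemma tau_lastIdx_le {I : ℕ} {τ : ℕ → ℝ} {t : ℝ} {k : ℕ} (hk : k + 2 ≤ I) (hτk : τ k ≤ t) :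
    τ (lastIdx I τ t) ≤ t := by
  obtain ⟨i, hi, hi_eq⟩ := Finset.exists_mem_eq_sup
    (Finset.filter (fun j => τ j ≤ t) (Finset.range (I - 1)))
    ⟨k, Finset.mem_filter.mpr ⟨Finset.mem_range.mpr (by omega), hτk⟩⟩ id
  rw [lastIdx, hi_eq]
  exact (Finset.mem_filter.mp hi).2

section Monotone

variable {I : ℕ} {τ : ℕ → ℝ} (hτ : ∀ j k : ℕ, j ≤ k → k ≤ I → τ j ≤ τ k)
include hτ

lemma le_lastIdx_iff {t : ℝ} {j k : ℕ} (hj : j + 2 ≤ I) (hjt : τ j ≤ t) (hk : k + 2 ≤ I) :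
    k ≤ lastIdx I τ t ↔ τ k ≤ t :=
  ⟨fun h => (hτ k _ h (by have := lastIdx_le I τ t; omega)).trans (tau_lastIdx_le hj hjt),
    le_lastIdx hk⟩

lemma muDrift_eq_driftCore (κ γ : ℝ → ℝ) (a : ℕ → ℝ) {t : ℝ} (hI : 2 ≤ I) :
    muDrift κ γ I a τ t = -κ t * driftCore I a (fun k => γ (τ k)) (lastIdx I τ t) (γ t) := by
  rw [muDrift, driftCore]
  split_ifs with h
  · rfl
  · have hlast : lastIdx I τ t = I - 2 :=
      le_antisymm (lastIdx_le I τ t)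
        (le_lastIdx (by omega) ((hτ _ _ (by omega) (by omega)).trans (not_lt.mp h)))
    have hcast : ((I - 2 : ℕ) : ℝ) = (I : ℝ) - 2 := by push_cast [Nat.cast_sub hI]; ring
    rw [hlast, hcast, show I - 2 + 1 = I - 1 by omega]
    ring_nf

lemma driftCore_lastIdx (γ : ℝ → ℝ) (a : ℕ → ℝ) {t : ℝ} {j : ℕ} (hj : j + 2 ≤ I)
    (hjt : τ j ≤ t) :
    driftCore I a (fun k => γ (τ k)) (lastIdx I τ t) (γ t)
      = driftCore I a (fun k => γ (τ k)) j (γ t)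
        - ∑ k ∈ Finset.Icc (j + 1) (I - 2),
            Acoef I a k / ((I : ℝ) - (k : ℝ)) * (γ (max t (τ k)) - γ (τ k)) := by
  set m := lastIdx I τ t
  have hjm : j ≤ m := le_lastIdx hj hjt
  have hm : m ≤ I - 2 := lastIdx_le I τ t
  rw [driftCore_eq_add_sum I a _ _ hjm (by omega), Finset.Icc_add_one_left_eq_Ioc,
    ← Finset.sum_Ioc_consecutive _ hjm hm]
  have hpast : ∀ k ∈ Finset.Ioc m (I - 2),
      Acoef I a k / ((I : ℝ) - (k : ℝ)) * (γ (max t (τ k)) - γ (τ k)) = 0 := by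
    intro k hk
    rw [Finset.mem_Ioc] at hk
    have : t < τ k := not_le.mp fun h => by
      have := (le_lastIdx_iff hτ hj hjt (by omega)).mpr h
      omega
    rw [max_eq_right this.le, sub_self, mul_zero]
  rw [Finset.sum_eq_zero hpast, add_zero, sub_eq_add_neg, ← Finset.sum_neg_distrib]
  congr 1
  refine Finset.sum_congr rfl fun k hk => ?_
  rw [Finset.mem_Ioc] at hk
  rw [max_eq_left ((le_lastIdx_iff hτ hj hjt (by omega)).mp hk.2)]
  ring

end Monotone

lemma thetaEq_of_le {κ γ : ℝ → ℝ} {I : ℕ} {a : ℕ → ℝ} {τ : ℕ → ℝ} {θ0 : ℕ → ℝ} {j : ℕ} {t : ℝ}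
    (ht : τ j ≤ t) :
    thetaEq κ γ I a τ θ0 j t = θ0 j + muDrift κ γ I a τ (τ j) / κ (τ j) + γ (τ j) * a j := by
  rw [thetaEq]
  split_ifs with h
  · rw [le_antisymm h ht]
  · rfl

lemma div_mul_Acoef (I : ℕ) (a : ℕ → ℝ) {j : ℕ} (hj : j < I) :
    ((I : ℝ) - j + 1) / ((I : ℝ) - j) * Acoef I a j
      = a j - aSig I a (j + 1) / ((I : ℝ) - j) := by
  have hI : (j : ℝ) + 1 ≤ I := by exact_mod_cast hj
  have h₁ : (I : ℝ) - j ≠ 0 := by linarith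
  have h₂ : (I : ℝ) - j + 1 ≠ 0 := by linarith
  rw [Acoef_of_lt I a hj]
  field_simp
  ring

theorem stmt10_general (T : ℝ) (κ γ : ℝ → ℝ)
    (hκpos : ∀ t ∈ Set.Icc (0 : ℝ) T, 0 < κ t)
    (I : ℕ) (a : ℕ → ℝ) (τ : ℕ → ℝ)
    (hτ0 : τ 0 = 0) (hτmono : ∀ j k : ℕ, j ≤ k → k ≤ I → τ j ≤ τ k)
    (θ0 : ℕ → ℝ) :
    ∀ j : ℕ, 1 ≤ j → j ≤ I - 2 → ∀ t ∈ Set.Icc (τ j) T,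
      muDrift κ γ I a τ t / κ t + γ t * a j + θ0 j - thetaEq κ γ I a τ θ0 j t
        = ((I : ℝ) - (j : ℝ) + 1) / ((I : ℝ) - (j : ℝ)) * Acoef I a j * (γ t - γ (τ j))
          + ∑ k ∈ Finset.Icc (j + 1) (I - 2),
              Acoef I a k / ((I : ℝ) - (k : ℝ)) * (γ (max t (τ k)) - γ (τ k)) := by
  intro j hj1 hj2 t ⟨hjt, htT⟩
  have hτj : 0 ≤ τ j := hτ0 ▸ hτmono 0 j j.zero_le (by omega)
  have ratio : ∀ s, τ j ≤ s → s ≤ T → muDrift κ γ I a τ s / κ s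
      = -driftCore I a (fun k => γ (τ k)) j (γ s)
        + ∑ k ∈ Finset.Icc (j + 1) (I - 2),
            Acoef I a k / ((I : ℝ) - (k : ℝ)) * (γ (max s (τ k)) - γ (τ k)) := by
    intro s hjs hsT
    rw [muDrift_eq_driftCore hτmono κ γ a (by omega), driftCore_lastIdx hτmono γ a (by omega) hjs,
      neg_mul, neg_div, mul_div_cancel_left₀ _ (hκpos s ⟨hτj.trans hjs, hsT⟩).ne']
    ring
  have later_stops : ∑ k ∈ Finset.Icc (j + 1) (I - 2),
      Acoef I a k / ((I : ℝ) - (k : ℝ)) * (γ (max (τ j) (τ k)) - γ (τ k)) = 0 :=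
    Finset.sum_eq_zero fun k hk => by
      rw [Finset.mem_Icc] at hk
      rw [max_eq_right (hτmono j k (by omega) (by omega)), sub_self, mul_zero]
  rw [thetaEq_of_le hjt, ratio t hjt htT, ratio (τ j) le_rfl (hjt.trans htT), later_stops,
    div_mul_Acoef I a (by omega), driftCore, driftCore]
  ring

/-- for `1 ≤ j ≤ I−2` and `t ∈ [τ(j), T]`,
`μ(t)/κ(t) + γ(t)·a(j) + θ(j)_{0−} − θ(j)(t)
  = ((I−j+1)/(I−j))·A(j)·(γ(t) − γ(τ(j)))
    + Σ_{k=j+1}^{I−2} (A(k)/(I−k))·(γ(max(t,τ(k))) − γ(τ(k)))`. -/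
theorem stmt10 (T : ℝ) (κ γ : ℝ → ℝ) (hT : 0 < T)
    (hκcont : ContinuousOn κ (Set.Icc 0 T))
    (hκpos : ∀ t ∈ Set.Icc (0 : ℝ) T, 0 < κ t)
    (hγcont : ContinuousOn γ (Set.Icc 0 T))
    (hγmono : StrictMonoOn γ (Set.Icc 0 T))
    (hγ0 : γ 0 = 0) (hγT : γ T = 1)
    (I : ℕ) (hI : 3 ≤ I) (a : ℕ → ℝ) (τ : ℕ → ℝ)
    (hτ0 : τ 0 = 0) (hτmono : ∀ j k : ℕ, j ≤ k → k ≤ I → τ j ≤ τ k)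
    (hτlast : τ (I - 1) = τ I) (hτT : τ (I - 1) < T)
    (θ0 : ℕ → ℝ) :
    ∀ j : ℕ, 1 ≤ j → j ≤ I - 2 → ∀ t ∈ Set.Icc (τ j) T,
      muDrift κ γ I a τ t / κ t + γ t * a j + θ0 j - thetaEq κ γ I a τ θ0 j t
        = ((I : ℝ) - (j : ℝ) + 1) / ((I : ℝ) - (j : ℝ)) * Acoef I a j * (γ t - γ (τ j))
          + ∑ k ∈ Finset.Icc (j + 1) (I - 2),
              Acoef I a k / ((I : ℝ) - (k : ℝ)) * (γ (max t (τ k)) - γ (τ k)) :=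
  stmt10_general T κ γ hκpos I a τ hτ0 hτmono θ0
end

section
/- If Σ_{k=1}^{I} θ(k)_{0−} = n, then the market clears at every time: Σ_{k=1}^{I} θ(k)(t) = n for all t ∈ [0,T]. -/
open MeasureTheory

/-!
On `[τ(j), τ(j+1)]` the drift satisfies `μ/κ = driftPiece j`, and this does not depend on the
choice of `j` when stop-trade times coincide, because `driftPiece (j+1) s = driftPiece j s`
whenever `τ(j+1) = s`. At a time `t` with `τ(j) ≤ t ≤ τ(j+1)`, agents `1, …, j` hold their frozen
positions and the `I − j` others hold `θ(k)_{0−} + driftPiece j t + γ(t)·a(k)`. With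
`C = driftConst`, the frozen increments telescope,
`frozenIncr (p+1) = (I−p−1)·C(p+1) − (I−p)·C(p)`, so they add up to `(I−j)·C(j)`, which cancels
the active agents' total `(I−j)·driftPiece j t + γ(t)·a_Σ^{≥j+1} = −(I−j)·C(j)`.
After `τ(I)` nobody trades, so the holdings stay those at `τ(I)`.
-/

open Finset

section MarketClearing

variable {κ γ : ℝ → ℝ} {I : ℕ} {a τ : ℕ → ℝ}

noncomputable def driftConst (γ : ℝ → ℝ) (I : ℕ) (a τ : ℕ → ℝ) (j : ℕ) : ℝ :=
  ∑ k ∈ Icc 1 j, γ (τ k) * Acoef I a k / ((I : ℝ) - k)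

/-- `μ(s)/κ(s)` for `s ∈ [τ(j), τ(j+1))`. -/
noncomputable def driftPiece (γ : ℝ → ℝ) (I : ℕ) (a τ : ℕ → ℝ) (j : ℕ) (s : ℝ) : ℝ :=
  -(γ s * aSig I a (j + 1) / ((I : ℝ) - j) + driftConst γ I a τ j)

/-- `θ(k) − θ(k)_{0−}` once agent `k` has stopped trading. -/
noncomputable def frozenIncr (γ : ℝ → ℝ) (I : ℕ) (a τ : ℕ → ℝ) (k : ℕ) : ℝ :=
  driftPiece γ I a τ (k - 1) (τ k) + γ (τ k) * a k

lemma aSig_eq_add {j : ℕ} (hj : j ≤ I) : aSig I a j = a j + aSig I a (j + 1) := by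
  rw [aSig, aSig, ← Ioc_insert_left hj, sum_insert (by simp), Icc_add_one_left_eq_Ioc]

lemma Acoef_succ_of_lt {p : ℕ} (hp : p + 1 < I) :
    Acoef I a (p + 1) = a (p + 1) - aSig I a (p + 1) / ((I : ℝ) - p) := by
  rw [Acoef, if_neg hp.ne]
  congr 2
  push_cast
  ring

lemma driftConst_succ (j : ℕ) :
    driftConst γ I a τ (j + 1)
      = driftConst γ I a τ j + γ (τ (j + 1)) * Acoef I a (j + 1) / ((I : ℝ) - (j + 1)) := by
  rw [driftConst, sum_Icc_succ_top (by omega), driftConst]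
  push_cast
  rfl

lemma driftPiece_succ_of_tau_eq {j : ℕ} {s : ℝ} (hj : j + 1 < I) (hτ : τ (j + 1) = s) :
    driftPiece γ I a τ (j + 1) s = driftPiece γ I a τ j s := by
  have hjI : (j : ℝ) + 1 < I := by exact_mod_cast hj
  have h₁ : (I : ℝ) - j ≠ 0 := by linarith
  have h₂ : (I : ℝ) - (j + 1) ≠ 0 := by linarith
  rw [driftPiece, driftPiece, driftConst_succ, Acoef_succ_of_lt hj, aSig_eq_add (a := a) hj.le,
    hτ]
  push_cast
  field_simp
  ring

lemma driftPiece_eq_of_tau_eq {j j' : ℕ} {s : ℝ} (hjj' : j ≤ j') (hj' : j' < I)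
    (hτ : ∀ p, j < p → p ≤ j' → τ p = s) :
    driftPiece γ I a τ j' s = driftPiece γ I a τ j s := by
  induction j', hjj' using Nat.le_induction with
  | base => rfl
  | succ p hjp ih =>
    rw [driftPiece_succ_of_tau_eq hj' (hτ (p + 1) (by omega) le_rfl),
      ih (by omega) fun q hq hq' => hτ q hq (by omega)]

lemma frozenIncr_succ {p : ℕ} (hp : p + 1 < I) :
    frozenIncr γ I a τ (p + 1)
      = ((I : ℝ) - (p + 1)) * driftConst γ I a τ (p + 1)
        - ((I : ℝ) - p) * driftConst γ I a τ p := by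
  have hpI : (p : ℝ) + 1 < I := by exact_mod_cast hp
  have h₁ : (I : ℝ) - p ≠ 0 := by linarith
  have h₂ : (I : ℝ) - (p + 1) ≠ 0 := by linarith
  rw [frozenIncr, Nat.add_sub_cancel, driftPiece, driftConst_succ, Acoef_succ_of_lt hp]
  field_simp
  ring

lemma sum_frozenIncr {m : ℕ} (hm : m < I) :
    ∑ k ∈ Icc 1 m, frozenIncr γ I a τ k = ((I : ℝ) - m) * driftConst γ I a τ m := by
  induction m with
  | zero => simp [driftConst]
  | succ p ih =>
    rw [sum_Icc_succ_top (by omega), ih (by omega), frozenIncr_succ hm]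
    push_cast
    ring

lemma sum_frozenIncr_add_sum_active {j : ℕ} (hj : j < I) (s : ℝ) :
    ∑ k ∈ Icc 1 j, frozenIncr γ I a τ k
      + ∑ k ∈ Icc (j + 1) I, (driftPiece γ I a τ j s + γ s * a k) = 0 := by
  have hjI : (j : ℝ) < I := by exact_mod_cast hj
  have h : (I : ℝ) - j ≠ 0 := by linarith
  rw [sum_frozenIncr hj, sum_add_distrib, sum_const, Nat.card_Icc, ← mul_sum, ← aSig, driftPiece,
    nsmul_eq_mul, Nat.cast_sub (by omega)]
  push_cast
  field_simp
  ring

lemma lastIdx_spec {j : ℕ} {t : ℝ} (hj : j < I - 1) (hjt : τ j ≤ t) :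
    j ≤ lastIdx I τ t ∧ lastIdx I τ t < I - 1 ∧ τ (lastIdx I τ t) ≤ t := by
  have hmem : j ∈ (range (I - 1)).filter (fun i => τ i ≤ t) := by simp [hj, hjt]
  obtain ⟨i, hi, hsup⟩ := exists_mem_eq_sup _ ⟨j, hmem⟩ id
  have hlast : lastIdx I τ t = i := hsup
  simp only [mem_filter, mem_range] at hi
  exact ⟨le_sup (f := id) hmem, hlast ▸ hi⟩


lemma muDrift_eq_mul_driftPiece (hI : 2 ≤ I) (hτmono : ∀ j k : ℕ, j ≤ k → k ≤ I → τ j ≤ τ k)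
    (hτlast : τ (I - 1) = τ I) {j : ℕ} {t : ℝ} (hj : j < I) (hjt : τ j ≤ t)
    (htj : t ≤ τ (j + 1)) :
    muDrift κ γ I a τ t = κ t * driftPiece γ I a τ j t := by
  have hτ_ge (p : ℕ) (hp : j < p) (hpI : p ≤ I) : t ≤ τ p := htj.trans (hτmono _ p hp hpI)
  by_cases hlt : t < τ (I - 1)
  · have hjI : j < I - 1 := by
      by_contra h
      exact (not_le.mpr hlt) (show j = I - 1 by omega ▸ hjt)
    obtain ⟨hjℓ, hℓI, hℓt⟩ := lastIdx_spec hjI hjt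
    have htie : driftPiece γ I a τ (lastIdx I τ t) t = driftPiece γ I a τ j t :=
      driftPiece_eq_of_tau_eq hjℓ (by omega) fun p hp hp' =>
        le_antisymm ((hτmono p _ hp' (by omega)).trans hℓt) (hτ_ge p hp (by omega))
    rw [muDrift, if_pos hlt, ← htie, driftPiece, driftConst]
    ring
  · have htlast : t = τ (I - 1) :=
      le_antisymm (hτlast ▸ hτ_ge I (by omega) le_rfl) (not_lt.mp hlt)
    have h₁ : driftPiece γ I a τ (I - 1) t = driftPiece γ I a τ j t :=
      driftPiece_eq_of_tau_eq (by omega) (by omega) fun p hp hp' =>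
        le_antisymm (htlast ▸ hτmono p (I - 1) hp' (by omega)) (hτ_ge p hp (by omega))
    have h₂ : driftPiece γ I a τ (I - 1) t = driftPiece γ I a τ (I - 2) t :=
      driftPiece_eq_of_tau_eq (by omega) (by omega) fun p hp hp' => by
        rw [show p = I - 1 by omega, htlast]
    rw [muDrift, if_neg hlt, ← h₁, h₂, driftPiece, driftConst, show I - 2 + 1 = I - 1 by omega,
      Nat.cast_sub hI, sub_sub_cancel]
    push_cast
    ring

lemma tau_mem_Icc (hτ0 : τ 0 = 0) (hτmono : ∀ j k : ℕ, j ≤ k → k ≤ I → τ j ≤ τ k) {k : ℕ}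
    (hk : k ≤ I) : τ k ∈ Set.Icc 0 (τ I) :=
  ⟨hτ0 ▸ hτmono 0 k k.zero_le hk, hτmono k I hk le_rfl⟩

lemma thetaEq_of_tau_le (hI : 2 ≤ I) (hτmono : ∀ j k : ℕ, j ≤ k → k ≤ I → τ j ≤ τ k)
    (hτlast : τ (I - 1) = τ I) (θ0 : ℕ → ℝ) {k : ℕ} {t : ℝ} (hk1 : 1 ≤ k) (hkI : k ≤ I)
    (hκ : κ (τ k) ≠ 0) (hkt : τ k ≤ t) :
    thetaEq κ γ I a τ θ0 k t = θ0 k + frozenIncr γ I a τ k := by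
  have hμ : muDrift κ γ I a τ (τ k) = κ (τ k) * driftPiece γ I a τ (k - 1) (τ k) :=
    muDrift_eq_mul_driftPiece hI hτmono hτlast (by omega) (hτmono _ _ (by omega) hkI)
      (by rw [Nat.sub_add_cancel hk1])
  have hfrozen : thetaEq κ γ I a τ θ0 k t
      = θ0 k + muDrift κ γ I a τ (τ k) / κ (τ k) + γ (τ k) * a k := by
    rw [thetaEq]
    split_ifs with h
    · rw [le_antisymm h hkt]
    · rfl
  rw [hfrozen, hμ, mul_div_cancel_left₀ _ hκ, frozenIncr]
  ring

lemma exists_le_le_succ {α : Type*} [LinearOrder α] (f : ℕ → α) {t : α} (n : ℕ) (h0 : f 0 ≤ t) (hn : t ≤ f (n + 1)) :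
    ∃ j ≤ n, f j ≤ t ∧ t ≤ f (j + 1) := by
  induction n with
  | zero => exact ⟨0, le_rfl, h0, hn⟩
  | succ n ih =>
    by_cases h : t ≤ f (n + 1)
    · obtain ⟨j, hj, hjt⟩ := ih h
      exact ⟨j, by omega, hjt⟩
    · exact ⟨n + 1, le_rfl, (not_le.mp h).le, hn⟩

lemma sum_thetaEq_of_le_tau (hI : 2 ≤ I) (hτ0 : τ 0 = 0)
    (hτmono : ∀ j k : ℕ, j ≤ k → k ≤ I → τ j ≤ τ k) (hτlast : τ (I - 1) = τ I)
    (hκ : ∀ s ∈ Set.Icc 0 (τ I), κ s ≠ 0) (θ0 : ℕ → ℝ) {t : ℝ} (ht0 : 0 ≤ t) (htI : t ≤ τ I) :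
    ∑ k ∈ Icc 1 I, thetaEq κ γ I a τ θ0 k t = ∑ k ∈ Icc 1 I, θ0 k := by
  obtain ⟨j, hj, hjt, htj⟩ :=
    exists_le_le_succ τ (I - 1) (hτ0 ▸ ht0) (by rwa [Nat.sub_add_cancel (by omega)])
  have hfrozen : ∀ k ∈ Icc 1 j, thetaEq κ γ I a τ θ0 k t = θ0 k + frozenIncr γ I a τ k := by
    intro k hk
    rw [mem_Icc] at hk
    exact thetaEq_of_tau_le hI hτmono hτlast θ0 hk.1 (by omega)
      (hκ _ (tau_mem_Icc hτ0 hτmono (by omega))) ((hτmono k j hk.2 (by omega)).trans hjt)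
  have hactive : ∀ k ∈ Icc (j + 1) I,
      thetaEq κ γ I a τ θ0 k t = θ0 k + (driftPiece γ I a τ j t + γ t * a k) := by
    intro k hk
    rw [mem_Icc] at hk
    rw [thetaEq, if_pos (htj.trans (hτmono _ k hk.1 hk.2)),
      muDrift_eq_mul_driftPiece hI hτmono hτlast (by omega) hjt htj,
      mul_div_cancel_left₀ _ (hκ t ⟨ht0, htI⟩)]
    ring
  have hsplit (f : ℕ → ℝ) :
      ∑ k ∈ Icc 1 I, f k = ∑ k ∈ Icc 1 j, f k + ∑ k ∈ Icc (j + 1) I, f k := by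
    have hIoc (m : ℕ) : Icc 1 m = Ioc 0 m := Icc_add_one_left_eq_Ioc 0 m
    rw [hIoc, hIoc, Icc_add_one_left_eq_Ioc, sum_Ioc_consecutive f j.zero_le (by omega)]
  rw [hsplit, hsplit θ0, sum_congr rfl hfrozen, sum_congr rfl hactive, sum_add_distrib,
    sum_add_distrib]
  linarith [sum_frozenIncr_add_sum_active (γ := γ) (a := a) (τ := τ) (by omega : j < I) t]

end MarketClearing

theorem stmt14_general (T : ℝ) (κ γ : ℝ → ℝ)
    (hκpos : ∀ t ∈ Set.Icc (0 : ℝ) T, 0 < κ t)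
    (I : ℕ) (hI : 3 ≤ I) (a : ℕ → ℝ) (τ : ℕ → ℝ)
    (hτ0 : τ 0 = 0) (hτmono : ∀ j k : ℕ, j ≤ k → k ≤ I → τ j ≤ τ k)
    (hτlast : τ (I - 1) = τ I) (hτT : τ (I - 1) < T)
    (θ0 : ℕ → ℝ) (n : ℝ) (hθ0 : (∑ k ∈ Finset.Icc 1 I, θ0 k) = n) :
    ∀ t ∈ Set.Icc (0 : ℝ) T, ∑ k ∈ Finset.Icc 1 I, thetaEq κ γ I a τ θ0 k t = n := by
  rintro t ⟨ht0, htT⟩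
  have hκ : ∀ s ∈ Set.Icc 0 (τ I), κ s ≠ 0 := fun s hs =>
    (hκpos s ⟨hs.1, hs.2.trans (hτlast ▸ hτT).le⟩).ne'
  have hI2 : 2 ≤ I := by omega
  rw [← hθ0]
  rcases le_or_gt t (τ I) with htI | hIt
  · exact sum_thetaEq_of_le_tau hI2 hτ0 hτmono hτlast hκ θ0 ht0 htI
  · rw [← sum_thetaEq_of_le_tau (γ := γ) (a := a) hI2 hτ0 hτmono hτlast hκ θ0
      (tau_mem_Icc hτ0 hτmono le_rfl).1 le_rfl]
    refine sum_congr rfl fun k hk => ?_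
    obtain ⟨hk1, hkI⟩ := mem_Icc.mp hk
    have hτk := tau_mem_Icc hτ0 hτmono hkI
    rw [thetaEq_of_tau_le hI2 hτmono hτlast θ0 hk1 hkI (hκ _ hτk) (hτk.2.trans hIt.le),
      thetaEq_of_tau_le hI2 hτmono hτlast θ0 hk1 hkI (hκ _ hτk) hτk.2]

/-- if `Σ_{k=1}^{I} θ(k)_{0−} = n`, then the market clears at every
time: `Σ_{k=1}^{I} θ(k)(t) = n` for all `t ∈ [0,T]`. -/
theorem stmt14 (T : ℝ) (κ γ : ℝ → ℝ) (hT : 0 < T)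
    (hκcont : ContinuousOn κ (Set.Icc 0 T))
    (hκpos : ∀ t ∈ Set.Icc (0 : ℝ) T, 0 < κ t)
    (hγcont : ContinuousOn γ (Set.Icc 0 T))
    (hγmono : StrictMonoOn γ (Set.Icc 0 T))
    (hγ0 : γ 0 = 0) (hγT : γ T = 1)
    (I : ℕ) (hI : 3 ≤ I) (a : ℕ → ℝ) (τ : ℕ → ℝ)
    (hτ0 : τ 0 = 0) (hτmono : ∀ j k : ℕ, j ≤ k → k ≤ I → τ j ≤ τ k)
    (hτlast : τ (I - 1) = τ I) (hτT : τ (I - 1) < T)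
    (θ0 : ℕ → ℝ) (n : ℝ) (hθ0 : (∑ k ∈ Finset.Icc 1 I, θ0 k) = n) :
    ∀ t ∈ Set.Icc (0 : ℝ) T, ∑ k ∈ Finset.Icc 1 I, thetaEq κ γ I a τ θ0 k t = n :=
  stmt14_general T κ γ hκpos I hI a τ hτ0 hτmono hτlast hτT θ0 n hθ0
end
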